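/- Let F = (f_1, …, f_m) : ℝⁿ → ℝᵐ be continuously differentiable, β ∈ (0,1), and let (p^k), (v^k), (t_k) be infinite sequences generated by the steepest descent method with Armijo rule. If there exists p̃ ∈ ℝⁿ with f_i(p̃) ≤ f_i(p^k) for all i = 1, …, m and all k ∈ ℕ, then Σ_{k=0}^∞ t_k² ‖v^k‖² < ∞. -/

import Mathlib

noncomputable section

/-- The set of candidate Armijo steplengths `{2⁻ʲ : j ∈ ℕ}` at the point `p`
in the direction `v`, for the multicriteria function `f` with parameter `β`. -/
def armijoSet {n m : ℕ} (f : Fin m → EuclideanSpace ℝ (Fin n) → ℝ) (β : ℝ)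
    (p v : EuclideanSpace ℝ (Fin n)) : Set ℝ :=
  {t : ℝ | (∃ j : ℕ, t = (1 / 2 : ℝ) ^ j) ∧
    ∀ i, f i (p + t • v) ≤ f i p + β * t * (inner ℝ (gradient (f i) p) v : ℝ)}

/-!
Testing the optimality of the steepest descent direction `vᵏ` against `w = 0` gives
`⟨∇fᵢ(pᵏ), vᵏ⟩ ≤ -‖vᵏ‖²/2` for every `i`, so the Armijo condition yields the sufficient decrease
`fᵢ(pᵏ⁺¹) + (β/2) tₖ‖vᵏ‖² ≤ fᵢ(pᵏ)`. Summing over `k` telescopes, and the lower bound `fᵢ(p̃)`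
bounds the partial sums of `tₖ‖vᵏ‖²`, which dominates `tₖ²‖vᵏ‖²` since `tₖ ≤ 1`.
-/

open InnerProductSpace

def IsSteepestDescentDir {ι E : Type*} [NormedAddCommGroup E] [InnerProductSpace ℝ E]
    (g : ι → E) (v : E) : Prop :=
  ∀ w, (⨆ i, ⟪g i, v⟫_ℝ) + ‖v‖ ^ 2 / 2 ≤ (⨆ i, ⟪g i, w⟫_ℝ) + ‖w‖ ^ 2 / 2

theorem IsSteepestDescentDir.inner_le {ι E : Type*} [Finite ι] [NormedAddCommGroup E]
    [InnerProductSpace ℝ E] {g : ι → E} {v : E} (hv : IsSteepestDescentDir g v) (i : ι) :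
    ⟪g i, v⟫_ℝ ≤ -(‖v‖ ^ 2 / 2) := by
  have h0 := hv 0
  simp only [inner_zero_right, Real.iSup_const_zero, norm_zero] at h0
  have hi : ⟪g i, v⟫_ℝ ≤ ⨆ j, ⟪g j, v⟫_ℝ :=
    le_ciSup (f := fun j => ⟪g j, v⟫_ℝ) (Set.finite_range _).bddAbove i
  linarith

section Armijo

variable {n m : ℕ} {f : Fin m → EuclideanSpace ℝ (Fin n) → ℝ} {β s : ℝ}
  {p v : EuclideanSpace ℝ (Fin n)}

theorem pos_of_mem_armijoSet (hs : s ∈ armijoSet f β p v) : 0 < s := by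
  obtain ⟨⟨j, rfl⟩, -⟩ := hs
  positivity

theorem le_one_of_mem_armijoSet (hs : s ∈ armijoSet f β p v) : s ≤ 1 := by
  obtain ⟨⟨j, rfl⟩, -⟩ := hs
  exact pow_le_one₀ (by norm_num) (by norm_num)

theorem add_le_of_mem_armijoSet (hs : s ∈ armijoSet f β p v) (hβ : 0 ≤ β)
    (hdesc : ∀ i, ⟪gradient (f i) p, v⟫_ℝ ≤ -(‖v‖ ^ 2 / 2)) (i : Fin m) :
    f i (p + s • v) + β / 2 * (s * ‖v‖ ^ 2) ≤ f i p := by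
  have hβs : 0 ≤ β * s := mul_nonneg hβ (pos_of_mem_armijoSet hs).le
  nlinarith [hs.2 i, mul_le_mul_of_nonneg_left (hdesc i) hβs]

end Armijo

theorem summable_of_succ_add_le {a c : ℕ → ℝ} {L : ℝ} (hc : ∀ k, 0 ≤ c k)
    (hdecr : ∀ k, a (k + 1) + c k ≤ a k) (hL : ∀ k, L ≤ a k) : Summable c := by
  refine summable_of_sum_range_le hc (c := a 0 - L) fun N => ?_
  have htel : ∑ k ∈ Finset.range N, c k ≤ a 0 - a N := by
    induction N with
    | zero => simp
    | succ N ih => rw [Finset.sum_range_succ]; linarith [hdecr N]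
  linarith [hL N]

theorem steepest_descent_summable_general
    {n m : ℕ} (hm : 0 < m) (f : Fin m → EuclideanSpace ℝ (Fin n) → ℝ)
    (β : ℝ) (hβ : β ∈ Set.Ioo (0 : ℝ) 1)
    (p v : ℕ → EuclideanSpace ℝ (Fin n)) (t : ℕ → ℝ)
    -- `vᵏ` is the steepest descent direction at `pᵏ`
    (hv : ∀ k w,
      (⨆ i, (inner ℝ (gradient (f i) (p k)) (v k) : ℝ)) + ‖v k‖ ^ 2 / 2 ≤
        (⨆ i, (inner ℝ (gradient (f i) (p k)) w : ℝ)) + ‖w‖ ^ 2 / 2)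
    -- `tₖ` is the largest Armijo steplength of the form `2⁻ʲ`
    (ht : ∀ k, IsGreatest (armijoSet f β (p k) (v k)) (t k))
    (hp : ∀ k, p (k + 1) = p k + t k • v k)
    (ptilde : EuclideanSpace ℝ (Fin n))
    (hptilde : ∀ k i, f i ptilde ≤ f i (p k)) :
    Summable (fun k => t k ^ 2 * ‖v k‖ ^ 2) := by
  set i₀ : Fin m := ⟨0, hm⟩
  have hβ₀ : 0 < β := hβ.1
  have ht_pos k : 0 < t k := pos_of_mem_armijoSet (ht k).1
  have hdecr k : f i₀ (p (k + 1)) + β / 2 * (t k * ‖v k‖ ^ 2) ≤ f i₀ (p k) := by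
    rw [hp k]
    exact add_le_of_mem_armijoSet (ht k).1 hβ₀.le (IsSteepestDescentDir.inner_le (hv k)) i₀
  have hsum : Summable fun k => t k * ‖v k‖ ^ 2 := by
    refine (summable_mul_left_iff (half_pos hβ₀).ne').1 ?_
    exact summable_of_succ_add_le (fun k => by have := ht_pos k; positivity) hdecr
      (fun k => hptilde k i₀)
  refine hsum.of_nonneg_of_le (fun k => by positivity) fun k => ?_
  have ht_sq : t k ^ 2 ≤ t k := by
    nlinarith [ht_pos k, le_one_of_mem_armijoSet (ht k).1]
  exact mul_le_mul_of_nonneg_right ht_sq (by positivity)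

/-- Summability claim from the proof of Proposition 21 (Euclidean case): if some
`p̃` satisfies `F(p̃) ≼ F(pᵏ)` for all `k`, then `∑ₖ tₖ²‖vᵏ‖² < ∞`. -/
theorem steepest_descent_summable
    {n m : ℕ} (hm : 0 < m) (f : Fin m → EuclideanSpace ℝ (Fin n) → ℝ)
    (hf : ∀ i, ContDiff ℝ 1 (f i)) (β : ℝ) (hβ : β ∈ Set.Ioo (0 : ℝ) 1)
    (p v : ℕ → EuclideanSpace ℝ (Fin n)) (t : ℕ → ℝ)
    -- each `pᵏ` is not Pareto critical
    (hcrit : ∀ k, ∃ w, ∀ i, (inner ℝ (gradient (f i) (p k)) w : ℝ) < 0)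
    -- `vᵏ` is the steepest descent direction at `pᵏ`
    (hv : ∀ k w,
      (⨆ i, (inner ℝ (gradient (f i) (p k)) (v k) : ℝ)) + ‖v k‖ ^ 2 / 2 ≤
        (⨆ i, (inner ℝ (gradient (f i) (p k)) w : ℝ)) + ‖w‖ ^ 2 / 2)
    -- `tₖ` is the largest Armijo steplength of the form `2⁻ʲ`
    (ht : ∀ k, IsGreatest (armijoSet f β (p k) (v k)) (t k))
    (hp : ∀ k, p (k + 1) = p k + t k • v k)
    (ptilde : EuclideanSpace ℝ (Fin n))
    (hptilde : ∀ k i, f i ptilde ≤ f i (p k)) :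
    Summable (fun k => t k ^ 2 * ‖v k‖ ^ 2) :=
  steepest_descent_summable_general hm f β hβ p v t hv ht hp ptilde hptilde
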